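/- arXiv:1701.05845 — 3 statements merged into one kernel-verified Lean document; each statement's English description precedes it below -/
import Mathlib

section
/- For maps f : A → X and g : B → Y between path-connected spaces (with X, Y normal), the sectional category of the product map satisfies secat(f × g) ≤ secat(f) + secat(g). -/
open unitInterval Set ContinuousMap

/-- `f` admits an open cover of its target by `n+1` open sets, on each of which the
inclusion factors through `f` up to homotopy (local homotopy sections). -/
def CoveredBySections {A X : Type*} [TopologicalSpace A] [TopologicalSpace X]
    (f : C(A, X)) (n : ℕ) : Prop :=
  ∃ U : Fin (n + 1) → Set X, (∀ i, IsOpen (U i)) ∧ (⋃ i, U i) = Set.univ ∧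
    ∀ i, ∃ s : C(U i, A),
      (f.comp s).Homotopic ⟨Subtype.val, continuous_subtype_val⟩

/-- The (reduced) sectional category of a map, as an extended natural number. -/
noncomputable def secat {A X : Type*} [TopologicalSpace A] [TopologicalSpace X]
    (f : C(A, X)) : ℕ∞ :=
  sInf ((fun n : ℕ => (n : ℕ∞)) '' {n : ℕ | CoveredBySections f n})

/-!
Take bump coverings `ρ` of `X` and `τ` of `Y` subordinate to covers `U₀, …, Uₙ` and
`V₀, …, Vₘ` with homotopy sections. At `(x, y)`, lay intervals of lengths `ρ₀ x, …, ρₙ x`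
end to end, likewise for `τ · y`, and let `O i j` be where the `i`-th interval of the first
stack overlaps the `j`-th of the second in positive length. Then `O i j ⊆ Uᵢ ×ˢ Vⱼ`, the sets
`O i j` cover `X × Y`, and the pairs `(i, j)` with `(x, y) ∈ O i j` form a chain for the product
order, so for fixed `k` the sets `O i j` with `i + j = k` are pairwise disjoint. Sections over
disjoint open sets glue, giving a cover by the `n + m + 1` sets `⋃_{i+j=k} O i j`.
-/

open Function

namespace ContinuousMap

variable {α β ι : Type*} [TopologicalSpace α] [TopologicalSpace β]

theorem exists_forall_apply_eq_of_isOpen_of_pairwiseDisjoint (S : ι → Set α)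
    (hS : ∀ i, IsOpen (S i)) (hd : Pairwise (Disjoint on S)) (hcov : ⋃ i, S i = univ)
    (φ : ∀ i, C(S i, β)) : ∃ F : C(α, β), ∀ i (x : S i), F x = φ i x := by
  have hφ (i j) (x : α) (hxi : x ∈ S i) (hxj : x ∈ S j) : φ i ⟨x, hxi⟩ = φ j ⟨x, hxj⟩ := by
    obtain rfl : i = j := by_contra fun hij => disjoint_left.1 (hd hij) hxi hxj
    rfl
  have hnhds (x : α) : ∃ i, S i ∈ nhds x := by
    obtain ⟨i, hi⟩ := mem_iUnion.1 (hcov ▸ mem_univ x)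
    exact ⟨i, (hS i).mem_nhds hi⟩
  exact ⟨liftCover S φ hφ hnhds, fun i x => liftCover_coe x⟩

theorem Homotopic.of_restrict_of_isOpen_of_pairwiseDisjoint {F₀ F₁ : C(α, β)} (S : ι → Set α)
    (hS : ∀ i, IsOpen (S i)) (hd : Pairwise (Disjoint on S)) (hcov : ⋃ i, S i = univ)
    (h : ∀ i, (F₀.restrict (S i)).Homotopic (F₁.restrict (S i))) : F₀.Homotopic F₁ := by
  have H i := (h i).some
  let T (i : ι) : Set (I × α) := Prod.snd ⁻¹' S i
  let e (i : ι) : C(T i, I × S i) :=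
    ⟨fun p => (p.1.1, ⟨p.1.2, p.2⟩), by fun_prop⟩
  obtain ⟨G, hG⟩ := exists_forall_apply_eq_of_isOpen_of_pairwiseDisjoint T
    (fun i => (hS i).preimage continuous_snd) (fun i j hij => (hd hij).preimage _)
    (by simp [T, ← preimage_iUnion, hcov]) fun i => (H i).toContinuousMap.comp (e i)
  have hG' (t : I) (x : α) : ∃ i, ∃ hx : x ∈ S i, G (t, x) = H i (t, ⟨x, hx⟩) := by
    obtain ⟨i, hi⟩ := mem_iUnion.1 (hcov ▸ mem_univ x)
    exact ⟨i, hi, hG i ⟨(t, x), hi⟩⟩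
  refine ⟨⟨G, fun x => ?_, fun x => ?_⟩⟩
  · obtain ⟨i, hx, hGx⟩ := hG' 0 x
    simpa using hGx
  · obtain ⟨i, hx, hGx⟩ := hG' 1 x
    simpa using hGx

end ContinuousMap

namespace IntervalStack

open Finset

variable {ι κ : Type*} [LinearOrder ι] [LocallyFiniteOrderBot ι]
  [LinearOrder κ] [LocallyFiniteOrderBot κ]

/-- Intervals of lengths `φ i` laid end to end in the order of `ι`: the `i`-th one is
`[leftEnd φ i, rightEnd φ i]`. -/
def leftEnd (φ : ι → ℝ) (i : ι) : ℝ := ∑ i' ∈ Iio i, φ i'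

def rightEnd (φ : ι → ℝ) (i : ι) : ℝ := ∑ i' ∈ Iic i, φ i'

def overlap (φ : ι → ℝ) (ψ : κ → ℝ) (i : ι) (j : κ) : ℝ :=
  min (rightEnd φ i) (rightEnd ψ j) - max (leftEnd φ i) (leftEnd ψ j)

theorem rightEnd_eq_leftEnd_add (φ : ι → ℝ) (i : ι) : rightEnd φ i = leftEnd φ i + φ i := by
  rw [rightEnd, leftEnd, Iic_eq_cons_Iio, sum_cons, add_comm]

theorem rightEnd_le_leftEnd_of_lt {φ : ι → ℝ} (hφ : ∀ i, 0 ≤ φ i) {i i' : ι} (h : i < i') :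
    rightEnd φ i ≤ leftEnd φ i' :=
  sum_le_sum_of_subset_of_nonneg (fun _ hk => mem_Iio.2 ((mem_Iic.1 hk).trans_lt h))
    fun k _ _ => hφ k

theorem overlap_pos_iff {φ : ι → ℝ} {ψ : κ → ℝ} {i : ι} {j : κ} :
    0 < overlap φ ψ i j ↔ (leftEnd φ i < rightEnd φ i ∧ leftEnd ψ j < rightEnd φ i) ∧
      (leftEnd φ i < rightEnd ψ j ∧ leftEnd ψ j < rightEnd ψ j) := by
  rw [overlap, sub_pos, lt_min_iff, max_lt_iff, max_lt_iff]

theorem pos_left_of_overlap_pos {φ : ι → ℝ} {ψ : κ → ℝ} {i : ι} {j : κ}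
    (h : 0 < overlap φ ψ i j) : 0 < φ i := by
  have := (overlap_pos_iff.1 h).1.1
  rw [rightEnd_eq_leftEnd_add] at this
  linarith

theorem pos_right_of_overlap_pos {φ : ι → ℝ} {ψ : κ → ℝ} {i : ι} {j : κ}
    (h : 0 < overlap φ ψ i j) : 0 < ψ j := by
  have := (overlap_pos_iff.1 h).2.2
  rw [rightEnd_eq_leftEnd_add] at this
  linarith

theorem le_of_overlap_pos_of_lt {φ : ι → ℝ} {ψ : κ → ℝ} (hφ : ∀ i, 0 ≤ φ i) (hψ : ∀ j, 0 ≤ ψ j)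
    {i i' : ι} {j j' : κ} (h : 0 < overlap φ ψ i j) (h' : 0 < overlap φ ψ i' j') (hi : i < i') :
    j ≤ j' := by
  by_contra! hj
  have := (overlap_pos_iff.1 h).1.2
  have := (overlap_pos_iff.1 h').2.1
  have := rightEnd_le_leftEnd_of_lt hφ hi
  have := rightEnd_le_leftEnd_of_lt hψ hj
  linarith

theorem exists_leftEnd_eq_zero {φ : ι → ℝ} (hφ : ∀ i, 0 ≤ φ i) {i₁ : ι} (hi₁ : 0 < φ i₁) :
    ∃ i, 0 < φ i ∧ leftEnd φ i = 0 := by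
  set s := (Finset.Iic i₁).filter (0 < φ ·)
  have hs : s.Nonempty := ⟨i₁, by simp [s, hi₁]⟩
  have hmin : 0 < φ (s.min' hs) := (mem_filter.1 (s.min'_mem hs)).2
  refine ⟨s.min' hs, hmin, sum_eq_zero fun k hk => (hφ k).antisymm' (not_lt.1 fun hk0 => ?_)⟩
  have hks : k ∈ s := mem_filter.2 ⟨mem_Iic.2 ((mem_Iio.1 hk).trans_le
    (mem_Iic.1 (mem_filter.1 (s.min'_mem hs)).1)).le, hk0⟩
  exact (mem_Iio.1 hk).not_ge (s.min'_le k hks)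

theorem exists_overlap_pos {φ : ι → ℝ} {ψ : κ → ℝ} (hφ : ∀ i, 0 ≤ φ i) (hψ : ∀ j, 0 ≤ ψ j)
    {i₁ : ι} {j₁ : κ} (hi₁ : 0 < φ i₁) (hj₁ : 0 < ψ j₁) : ∃ i j, 0 < overlap φ ψ i j := by
  obtain ⟨i, hi, hi0⟩ := exists_leftEnd_eq_zero hφ hi₁
  obtain ⟨j, hj, hj0⟩ := exists_leftEnd_eq_zero hψ hj₁
  refine ⟨i, j, ?_⟩
  rw [overlap, rightEnd_eq_leftEnd_add, rightEnd_eq_leftEnd_add, hi0, hj0]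
  simp [hi, hj]

theorem eq_of_overlap_pos_of_val_add_eq {a b : ℕ} {φ : Fin a → ℝ} {ψ : Fin b → ℝ}
    (hφ : ∀ i, 0 ≤ φ i) (hψ : ∀ j, 0 ≤ ψ j) {i i' : Fin a} {j j' : Fin b}
    (h : 0 < overlap φ ψ i j) (h' : 0 < overlap φ ψ i' j')
    (hsum : (i : ℕ) + j = i' + j') : i = i' ∧ j = j' := by
  rcases lt_trichotomy i i' with hi | rfl | hi
  · have := le_of_overlap_pos_of_lt hφ hψ h h' hi
    omega
  · omega
  · have := le_of_overlap_pos_of_lt hφ hψ h' h hi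
    omega

end IntervalStack

def HasHomotopySection {A X : Type*} [TopologicalSpace A] [TopologicalSpace X]
    (f : C(A, X)) (U : Set X) : Prop :=
  ∃ s : C(U, A), (f.comp s).Homotopic ⟨Subtype.val, continuous_subtype_val⟩

namespace HasHomotopySection

variable {A X B Y : Type*} [TopologicalSpace A] [TopologicalSpace X] [TopologicalSpace B]
  [TopologicalSpace Y] {f : C(A, X)} {g : C(B, Y)}

theorem mono {U V : Set X} (h : HasHomotopySection f V) (hUV : U ⊆ V) :
    HasHomotopySection f U := by
  obtain ⟨s, hs⟩ := h
  exact ⟨s.comp (inclusion hUV), hs.comp (.refl _)⟩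

theorem prodMap {U : Set X} {V : Set Y} (hf : HasHomotopySection f U)
    (hg : HasHomotopySection g V) : HasHomotopySection (f.prodMap g) (U ×ˢ V) := by
  obtain ⟨s, hs⟩ := hf
  obtain ⟨t, ht⟩ := hg
  let p : C(U ×ˢ V, U) := ⟨fun x => ⟨x.1.1, x.2.1⟩, by fun_prop⟩
  let q : C(U ×ˢ V, V) := ⟨fun x => ⟨x.1.2, x.2.2⟩, by fun_prop⟩
  exact ⟨(s.comp p).prodMk (t.comp q), (hs.comp (.refl p)).prodMk (ht.comp (.refl q))⟩

theorem iUnion {ι : Type*} {W : ι → Set X} (hW : ∀ i, IsOpen (W i))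
    (hd : Pairwise (Disjoint on W)) (h : ∀ i, HasHomotopySection f (W i)) :
    HasHomotopySection f (⋃ i, W i) := by
  choose s hs using h
  let S (i : ι) : Set (⋃ i, W i) := Subtype.val ⁻¹' W i
  have hSo (i : ι) : IsOpen (S i) := (hW i).preimage continuous_subtype_val
  have hSd : Pairwise (Disjoint on S) := fun i j hij => (hd hij).preimage _
  have hScov : ⋃ i, S i = univ := by simp [S, ← preimage_iUnion]
  let e (i : ι) : C(S i, W i) := ⟨fun x => ⟨x.1.1, x.2⟩, by fun_prop⟩
  obtain ⟨glued, hglued⟩ := exists_forall_apply_eq_of_isOpen_of_pairwiseDisjoint S hSo hSd hScov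
    fun i => (s i).comp (e i)
  refine ⟨glued, .of_restrict_of_isOpen_of_pairwiseDisjoint S hSo hSd hScov fun i => ?_⟩
  have hrestrict : (f.comp glued).restrict (S i) = (f.comp (s i)).comp (e i) := by
    ext x
    simp [hglued i x]
  rw [hrestrict]
  exact (hs i).comp (.refl (e i))

end HasHomotopySection

theorem BumpCovering.IsSubordinate.mem_of_pos {X ι : Type*} [TopologicalSpace X] {s : Set X}
    {ρ : BumpCovering ι X s} {U : ι → Set X} (hρ : ρ.IsSubordinate U) {i : ι} {x : X}
    (hx : 0 < ρ i x) : x ∈ U i :=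
  hρ i (subset_tsupport _ hx.ne')

section secat

variable {A X B Y : Type*} [TopologicalSpace A] [TopologicalSpace X] [TopologicalSpace B]
  [TopologicalSpace Y] {f : C(A, X)} {g : C(B, Y)}

open IntervalStack in
theorem CoveredBySections.prodMap [NormalSpace X] [NormalSpace Y] {n m : ℕ}
    (hf : CoveredBySections f n) (hg : CoveredBySections g m) :
    CoveredBySections (f.prodMap g) (n + m) := by
  obtain ⟨U, hUo, hUc, hUs⟩ := hf
  obtain ⟨V, hVo, hVc, hVs⟩ := hg
  obtain ⟨ρ, hρ⟩ := BumpCovering.exists_isSubordinate_of_locallyFinite isClosed_univ U hUo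
    (locallyFinite_of_finite U) hUc.ge
  obtain ⟨τ, hτ⟩ := BumpCovering.exists_isSubordinate_of_locallyFinite isClosed_univ V hVo
    (locallyFinite_of_finite V) hVc.ge
  let O (c : Fin (n + 1) × Fin (m + 1)) : Set (X × Y) :=
    {p | 0 < overlap (ρ · p.1) (τ · p.2) c.1 c.2}
  have hOo (c) : IsOpen (O c) :=
    isOpen_lt continuous_const (by simp only [overlap, leftEnd, rightEnd]; fun_prop)
  have hOs (c) : HasHomotopySection (f.prodMap g) (O c) :=
    (HasHomotopySection.prodMap (hUs c.1) (hVs c.2)).mono fun p hp =>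
      ⟨hρ.mem_of_pos (pos_left_of_overlap_pos (φ := (ρ · p.1)) hp),
        hτ.mem_of_pos (pos_right_of_overlap_pos (ψ := (τ · p.2)) hp)⟩
  refine ⟨fun k => ⋃ c : {c : Fin (n + 1) × Fin (m + 1) // (c.1 : ℕ) + c.2 = k}, O c,
    fun k => isOpen_iUnion fun c => hOo c, ?_,
    fun k => HasHomotopySection.iUnion (fun c => hOo c) ?_ fun c => hOs c⟩
  · refine eq_univ_of_forall fun p => ?_
    obtain ⟨i, j, hij⟩ := exists_overlap_pos (ρ.nonneg · p.1) (τ.nonneg · p.2)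
      ((ρ.ind_apply p.1 trivial).symm ▸ one_pos) ((τ.ind_apply p.2 trivial).symm ▸ one_pos)
    exact mem_iUnion.2 ⟨⟨i + j, by omega⟩, mem_iUnion.2 ⟨⟨(i, j), rfl⟩, hij⟩⟩
  · rintro ⟨c, hc⟩ ⟨c', hc'⟩ hne
    refine disjoint_left.2 fun p hp hp' => hne ?_
    obtain ⟨h1, h2⟩ := eq_of_overlap_pos_of_val_add_eq (ρ.nonneg · p.1) (τ.nonneg · p.2) hp hp'
      (hc.trans hc'.symm)
    exact Subtype.ext (Prod.ext h1 h2)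

theorem secat_le_of_coveredBySections {n : ℕ} (h : CoveredBySections f n) : secat f ≤ n :=
  sInf_le ⟨n, h, rfl⟩

theorem coveredBySections_toNat_secat (h : secat f ≠ ⊤) :
    CoveredBySections f (secat f).toNat := by
  have hne : {n | CoveredBySections f n}.Nonempty := by
    refine nonempty_iff_ne_empty.2 fun hempty => h ?_
    rw [secat, hempty, image_empty, sInf_empty]
  rw [secat, sInf_image, ← ENat.natCast_sInf hne, ENat.toNat_natCast]
  exact Nat.sInf_mem hne

end secat

theorem secat_prodMap_le_general {A X B Y : Type}
    [TopologicalSpace A] [TopologicalSpace X] [TopologicalSpace B] [TopologicalSpace Y]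
    [NormalSpace X] [NormalSpace Y]
    (f : C(A, X)) (g : C(B, Y)) :
    secat (f.prodMap g) ≤ secat f + secat g := by
  rcases eq_or_ne (secat f) ⊤ with hf | hf
  · simp [hf]
  rcases eq_or_ne (secat g) ⊤ with hg | hg
  · simp [hg]
  calc secat (f.prodMap g) ≤ ((secat f).toNat + (secat g).toNat : ℕ) :=
        secat_le_of_coveredBySections
          ((coveredBySections_toNat_secat hf).prodMap (coveredBySections_toNat_secat hg))
    _ = secat f + secat g := by
        rw [Nat.cast_add, ENat.natCast_toNat hf, ENat.natCast_toNat hg]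

/-- Sectional category of a product map: `secat(f × g) ≤ secat(f) + secat(g)`
for maps into normal path-connected spaces. -/
theorem secat_prodMap_le {A X B Y : Type}
    [TopologicalSpace A] [TopologicalSpace X] [TopologicalSpace B] [TopologicalSpace Y]
    [PathConnectedSpace X] [PathConnectedSpace Y] [NormalSpace X] [NormalSpace Y]
    (f : C(A, X)) (g : C(B, Y)) :
    secat (f.prodMap g) ≤ secat f + secat g :=
  secat_prodMap_le_general f g
end

section
/- For path-connected spaces X and Y (with X × X and Y × Y normal), TC(X × Y) ≤ TC(X) + TC(Y). -/
/-!
Pull partitions of unity `fᵢ`, `gⱼ` subordinate to motion-planning covers `Uᵢ` of `X × X` and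
`Vⱼ` of `Y × Y` back to `(X × Y) × (X × Y) ≃ₜ (X × X) × (Y × Y)` and let `Wᵢⱼ` be the open set
where `fᵢ gⱼ` is positive and exceeds every `fₖ gₗ` with `k + l ≥ i + j`, `(k, l) ≠ (i, j)`.
It lies over `Uᵢ × Vⱼ`, which has a product planner, and sets with the same `i + j` are disjoint,
so each `⋃_{i + j = r} Wᵢⱼ` has a planner. These `m + n + 1` sets cover: at a point, the pair of
largest indices `i`, `j` with `fᵢ`, `gⱼ` positive is in `Wᵢⱼ`.
-/

open unitInterval Set ContinuousMap

/-- `X × X` admits a cover by `n+1` open sets, on each of which the free path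
fibration `ev₀,₁ : Xᴵ → X × X` admits a continuous section. -/
def TCCover (X : Type*) [TopologicalSpace X] (n : ℕ) : Prop :=
  ∃ U : Fin (n + 1) → Set (X × X), (∀ i, IsOpen (U i)) ∧ (⋃ i, U i) = Set.univ ∧
    ∀ i, ∃ s : C(U i, C(I, X)),
      ∀ p : U i, (s p) 0 = (p : X × X).1 ∧ (s p) 1 = (p : X × X).2

/-- Farber's (reduced) topological complexity, as an extended natural number. -/
noncomputable def TopComplexity (X : Type*) [TopologicalSpace X] : ℕ∞ :=
  sInf ((fun n : ℕ => (n : ℕ∞)) '' {n : ℕ | TCCover X n})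

open Topology Function

section MotionPlanner

variable {X Y : Type*} [TopologicalSpace X] [TopologicalSpace Y]

/-- `TCCover X n` asks for `n + 1` open sets with this property covering `X × X`. -/
def HasMotionPlanner (A : Set (X × X)) : Prop :=
  ∃ s : C(A, C(I, X)), ∀ p : A, s p 0 = (p : X × X).1 ∧ s p 1 = (p : X × X).2

theorem HasMotionPlanner.mono {A B : Set (X × X)} (hB : HasMotionPlanner B) (hAB : A ⊆ B) :
    HasMotionPlanner A :=
  let ⟨s, hs⟩ := hB
  ⟨s.comp (ContinuousMap.inclusion hAB), fun p => hs (Set.inclusion hAB p)⟩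

theorem HasMotionPlanner.iUnion {ι : Type*} {A : ι → Set (X × X)} (hA : ∀ i, IsOpen (A i))
    (hd : Pairwise (Disjoint on A)) (h : ∀ i, HasMotionPlanner (A i)) :
    HasMotionPlanner (⋃ i, A i) := by
  choose s hs using h
  let S : ι → Set (⋃ i, A i) := fun i => Subtype.val ⁻¹' A i
  let φ : ∀ i, C(S i, C(I, X)) := fun i => (s i).comp ⟨fun x => ⟨x.1.1, x.2⟩, by fun_prop⟩
  have hφ : ∀ i j x (hi : x ∈ S i) (hj : x ∈ S j), φ i ⟨x, hi⟩ = φ j ⟨x, hj⟩ := by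
    intro i j x hi hj
    obtain rfl : i = j := hd.eq (not_disjoint_iff.2 ⟨x, hi, hj⟩)
    rfl
  have hS : ∀ x, ∃ i, S i ∈ 𝓝 x := fun x =>
    let ⟨i, hi⟩ := mem_iUnion.1 x.2
    ⟨i, ((hA i).preimage continuous_subtype_val).mem_nhds hi⟩
  refine ⟨liftCover S φ hφ hS, fun x => ?_⟩
  obtain ⟨i, hi⟩ : ∃ i, (x : X × X) ∈ A i := mem_iUnion.1 x.2
  rw [show liftCover S φ hφ hS x = φ i ⟨x, hi⟩ from liftCover_coe (⟨x, hi⟩ : S i)]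
  exact hs i _

theorem HasMotionPlanner.prod {A : Set (X × X)} {B : Set (Y × Y)} (hA : HasMotionPlanner A)
    (hB : HasMotionPlanner B) :
    HasMotionPlanner (Homeomorph.prodProdProdComm X Y X Y ⁻¹' A ×ˢ B) := by
  obtain ⟨sA, hsA⟩ := hA
  obtain ⟨sB, hsB⟩ := hB
  let e := Homeomorph.prodProdProdComm X Y X Y
  let a : C(e ⁻¹' A ×ˢ B, A) := ⟨fun c => ⟨(e c).1, c.2.1⟩, by fun_prop⟩
  let b : C(e ⁻¹' A ×ˢ B, B) := ⟨fun c => ⟨(e c).2, c.2.2⟩, by fun_prop⟩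
  let H : C(e ⁻¹' A ×ˢ B × I, X × Y) :=
    ⟨fun ct => (sA (a ct.1) ct.2, sB (b ct.1) ct.2), by fun_prop⟩
  exact ⟨H.curry, fun c => ⟨Prod.ext (hsA (a c)).1 (hsB (b c)).1,
    Prod.ext (hsA (a c)).2 (hsB (b c)).2⟩⟩

end MotionPlanner

theorem exists_last_pos {ι : Type*} [LinearOrder ι] [Finite ι] {a : ι → ℝ} (ha : ∀ i, 0 ≤ a i)
    (h : ∃ i, 0 < a i) : ∃ i, 0 < a i ∧ ∀ k, i < k → a k = 0 := by
  obtain ⟨i, hi, hmax⟩ := Set.exists_max_image {i | 0 < a i} id (toFinite _) h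
  exact ⟨i, hi, fun k hik =>
    (ha k).eq_or_lt.elim Eq.symm fun hk => absurd (hmax k hk) hik.not_ge⟩

section Dominance

variable {Z ι : Type*}

def dominanceSet (h : ι → Z → ℝ) (rank : ι → ℕ) (p : ι) : Set Z :=
  {z | 0 < h p z ∧ ∀ q, q ≠ p → rank p ≤ rank q → h q z < h p z}

theorem isOpen_dominanceSet [TopologicalSpace Z] [Finite ι] {h : ι → Z → ℝ}
    (hc : ∀ p, Continuous (h p)) (rank : ι → ℕ) (p : ι) : IsOpen (dominanceSet h rank p) := by
  show IsOpen ({z | 0 < h p z} ∩ {z | ∀ q, q ≠ p → rank p ≤ rank q → h q z < h p z})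
  simp only [ofPred_forall]
  exact (isOpen_lt continuous_const (hc p)).inter <| isOpen_iInter_of_finite fun q =>
    isOpen_iInter_of_finite fun _ => isOpen_iInter_of_finite fun _ => isOpen_lt (hc q) (hc p)

theorem disjoint_dominanceSet {h : ι → Z → ℝ} {rank : ι → ℕ} {p q : ι} (hpq : p ≠ q)
    (hrank : rank p = rank q) : Disjoint (dominanceSet h rank p) (dominanceSet h rank q) :=
  disjoint_left.2 fun _ hp hq => (hp.2 q hpq.symm hrank.le).asymm (hq.2 p hpq hrank.ge)

theorem exists_mem_dominanceSet_mul {m n : ℕ} {f : Fin (m + 1) → Z → ℝ}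
    {g : Fin (n + 1) → Z → ℝ} (hf : ∀ i z, 0 ≤ f i z) (hg : ∀ j z, 0 ≤ g j z) {z : Z}
    (hfz : ∃ i, 0 < f i z) (hgz : ∃ j, 0 < g j z) :
    ∃ i j, z ∈ dominanceSet (fun p z => f p.1 z * g p.2 z) (fun p => p.1 + p.2) (i, j) := by
  obtain ⟨i, hi, hfi⟩ := exists_last_pos (hf · z) hfz
  obtain ⟨j, hj, hgj⟩ := exists_last_pos (hg · z) hgz
  refine ⟨i, j, mul_pos hi hj, fun ⟨k, l⟩ hkl hle => ?_⟩
  suffices f k z * g l z = 0 by simpa only [this] using mul_pos hi hj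
  rcases lt_or_ge i k with hik | hki
  · rw [hfi k hik, zero_mul]
  · have hjl : j < l := by
      by_contra! hlj
      simp only at hle
      obtain rfl : k = i := Fin.ext (by omega)
      obtain rfl : l = j := Fin.ext (by omega)
      exact hkl rfl
    rw [hgj l hjl, mul_zero]

end Dominance

theorem TCCover.prod {X Y : Type*} [TopologicalSpace X] [TopologicalSpace Y]
    [NormalSpace (X × X)] [NormalSpace (Y × Y)] {m n : ℕ} (hX : TCCover X m)
    (hY : TCCover Y n) : TCCover (X × Y) (m + n) := by
  obtain ⟨U, hUo, hUc, hUs⟩ := hX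
  obtain ⟨V, hVo, hVc, hVs⟩ := hY
  obtain ⟨f, hfU⟩ := PartitionOfUnity.exists_isSubordinate_of_locallyFinite isClosed_univ U hUo
    (locallyFinite_of_finite U) hUc.superset
  obtain ⟨g, hgV⟩ := PartitionOfUnity.exists_isSubordinate_of_locallyFinite isClosed_univ V hVo
    (locallyFinite_of_finite V) hVc.superset
  let e := Homeomorph.prodProdProdComm X Y X Y
  let h : Fin (m + 1) × Fin (n + 1) → (X × Y) × X × Y → ℝ := fun p c =>
    f p.1 (e c).1 * g p.2 (e c).2
  let rank : Fin (m + 1) × Fin (n + 1) → ℕ := fun p => p.1 + p.2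
  have hc : ∀ p, Continuous (h p) := fun p => by fun_prop
  have hsub : ∀ p, dominanceSet h rank p ⊆ e ⁻¹' U p.1 ×ˢ V p.2 := fun p c hpc =>
    have hne := mul_ne_zero_iff.1 hpc.1.ne'
    ⟨hfU p.1 (subset_tsupport _ hne.1), hgV p.2 (subset_tsupport _ hne.2)⟩
  refine ⟨fun r => ⋃ p : {p // rank p = r}, dominanceSet h rank p,
    fun r => isOpen_iUnion fun p => isOpen_dominanceSet hc rank p, ?_, fun r => ?_⟩
  · refine eq_univ_of_forall fun c => ?_
    obtain ⟨i, j, hij⟩ := exists_mem_dominanceSet_mul (f := fun i c => f i (e c).1)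
      (g := fun j c => g j (e c).2) (fun i c => f.nonneg i _) (fun j c => g.nonneg j _)
      (f.exists_pos (mem_univ _)) (g.exists_pos (mem_univ _))
    exact mem_iUnion.2 ⟨⟨i + j, by omega⟩, mem_iUnion.2 ⟨⟨(i, j), rfl⟩, hij⟩⟩
  · exact HasMotionPlanner.iUnion (fun p => isOpen_dominanceSet hc rank p)
      (fun p q hpq => disjoint_dominanceSet (Subtype.coe_injective.ne hpq) (p.2.trans q.2.symm))
      fun p => (HasMotionPlanner.prod (hUs _) (hVs _)).mono (hsub p)

theorem TCCover.topComplexity_le {X : Type*} [TopologicalSpace X] {n : ℕ} (h : TCCover X n) :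
    TopComplexity X ≤ n :=
  sInf_le ⟨n, h, rfl⟩

theorem topComplexity_eq_iInf (X : Type*) [TopologicalSpace X] :
    TopComplexity X = ⨅ (n : ℕ) (_ : TCCover X n), (n : ℕ∞) :=
  sInf_image

theorem tc_prod_le_general (X Y : Type) [TopologicalSpace X] [TopologicalSpace Y]
    [NormalSpace (X × X)] [NormalSpace (Y × Y)] :
    TopComplexity (X × Y) ≤ TopComplexity X + TopComplexity Y := by
  rw [topComplexity_eq_iInf X, topComplexity_eq_iInf Y]
  exact ENat.le_iInf₂_add_iInf₂ fun m hm n hn => by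
    exact_mod_cast (hm.prod hn).topComplexity_le

/-- Topological complexity of a product: `TC(X × Y) ≤ TC(X) + TC(Y)`. -/
theorem tc_prod_le (X Y : Type) [TopologicalSpace X] [TopologicalSpace Y]
    [PathConnectedSpace X] [PathConnectedSpace Y]
    [NormalSpace (X × X)] [NormalSpace (Y × Y)] :
    TopComplexity (X × Y) ≤ TopComplexity X + TopComplexity Y :=
  tc_prod_le_general X Y
end

section
/- Let F --ι--> E --π--> B be a fibration over a well-pointed path-connected base, and suppose given maps f : A → F and g : C → E and a map A → C making the square with ι commute. Then secat(g) + 1 ≤ (cat(B) + 1)(secat(f) + 1). -/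
open unitInterval Set ContinuousMap

universe u

/-- `X` admits a cover by `n+1` open sets, each contractible in `X`. -/
def NullCover (X : Type*) [TopologicalSpace X] (n : ℕ) : Prop :=
  ∃ U : Fin (n + 1) → Set X, (∀ i, IsOpen (U i)) ∧ (⋃ i, U i) = Set.univ ∧
    ∀ i, (⟨Subtype.val, continuous_subtype_val⟩ : C(U i, X)).Nullhomotopic

/-- The (reduced) Lusternik-Schnirelmann category, as an extended natural number. -/
noncomputable def LScat (X : Type*) [TopologicalSpace X] : ℕ∞ :=
  sInf ((fun n : ℕ => (n : ℕ∞)) '' {n : ℕ | NullCover X n})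

/-- A Hurewicz fibration: a map with the homotopy lifting property with respect to
all spaces. -/
def IsHurewiczFibration {E B : Type u} [TopologicalSpace E] [TopologicalSpace B]
    (p : C(E, B)) : Prop :=
  ∀ (Z : Type u) [TopologicalSpace Z] (h₀ : C(Z, E)) (H : C(Z × I, B)),
    (∀ z, H (z, 0) = p (h₀ z)) →
    ∃ G : C(Z × I, E), (∀ zt : Z × I, p (G zt) = H zt) ∧ ∀ z, G (z, 0) = h₀ z

/-- A cofibration: a map with the homotopy extension property with respect to
all spaces. -/
def IsCofibration {A X : Type u} [TopologicalSpace A] [TopologicalSpace X]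
    (i : C(A, X)) : Prop :=
  ∀ (Z : Type u) [TopologicalSpace Z] (h₀ : C(X, Z)) (H : C(A × I, Z)),
    (∀ a, H (a, 0) = h₀ (i a)) →
    ∃ G : C(X × I, Z), (∀ a t, G (i a, t) = H (a, t)) ∧ ∀ x, G (x, 0) = h₀ x

/-! Cover `B` by `n + 1` open sets contractible in `B` and the fibre by `m + 1` open sets
carrying homotopy sections of `f`. Homotopy lifting deforms `π⁻¹(U)`, for `U` contractible in the
path-connected base, into the fibre by some `r`; pulling the cover of the fibre back along these
`r` gives `(n + 1)(m + 1)` open sets covering `E`, and on each of them `φ ∘ s ∘ r` is a homotopy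
section of `g` because `g ∘ φ = ι ∘ f` and `ι ∘ r` is homotopic to the inclusion. -/

namespace ContinuousMap

variable {X Y Z A C E F : Type*} [TopologicalSpace X] [TopologicalSpace Y] [TopologicalSpace Z]
  [TopologicalSpace A] [TopologicalSpace C] [TopologicalSpace E] [TopologicalSpace F]

abbrev subtypeVal (s : Set X) : C(s, X) := ⟨Subtype.val, continuous_subtype_val⟩

def HasHomotopyLift (f : C(A, X)) (h : C(Y, X)) : Prop :=
  ∃ s : C(Y, A), (f.comp s).Homotopic h

namespace HasHomotopyLift

variable {f : C(A, X)} {h h' : C(Y, X)}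

theorem comp_right (hf : HasHomotopyLift f h) (k : C(Z, Y)) : HasHomotopyLift f (h.comp k) :=
  let ⟨s, hs⟩ := hf
  ⟨s.comp k, hs.comp (.refl k)⟩

theorem comp_left (hf : HasHomotopyLift f h) (ι : C(X, E)) :
    HasHomotopyLift (ι.comp f) (ι.comp h) :=
  let ⟨s, hs⟩ := hf
  ⟨s, (Homotopic.refl ι).comp hs⟩

theorem trans_homotopic (hf : HasHomotopyLift f h) (hh : h.Homotopic h') : HasHomotopyLift f h' :=
  let ⟨s, hs⟩ := hf
  ⟨s, hs.trans hh⟩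

theorem of_comp {g : C(C, X)} {φ : C(A, C)} (hf : HasHomotopyLift (g.comp φ) h) :
    HasHomotopyLift g h :=
  let ⟨s, hs⟩ := hf
  ⟨φ.comp s, hs⟩

theorem of_forall_mem {V : Set X} (hV : HasHomotopyLift f (subtypeVal V)) (h : C(Y, X))
    (hh : ∀ y, h y ∈ V) : HasHomotopyLift f h :=
  hV.comp_right ⟨fun y => ⟨h y, hh y⟩, h.continuous.subtype_mk _⟩

end HasHomotopyLift

theorem hasHomotopyLift_subtypeVal_image_preimage {ι : C(F, E)} {f : C(A, F)} {g : C(C, E)}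
    {φ : C(A, C)} (hsq : g.comp φ = ι.comp f) {W : Set E} {r : C(W, F)}
    (hr : (ι.comp r).Homotopic (subtypeVal W)) {V : Set F}
    (hV : HasHomotopyLift f (subtypeVal V)) :
    HasHomotopyLift g (subtypeVal (Subtype.val '' (r ⁻¹' V))) := by
  let ρ : C(Subtype.val '' (r ⁻¹' V), W) := inclusion (Subtype.coe_image_subset W _)
  have hρ : ∀ x, r (ρ x) ∈ V := by
    rintro ⟨_, w, hw, rfl⟩
    exact hw
  have hlift : HasHomotopyLift (ι.comp f) (ι.comp (r.comp ρ)) :=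
    (hV.of_forall_mem (r.comp ρ) hρ).comp_left ι
  rw [← hsq] at hlift
  exact (hlift.trans_homotopic (hr.comp (.refl ρ))).of_comp

end ContinuousMap

theorem ENat.sInf_image_natCast_add_one_le_mul {S T R : Set ℕ}
    (h : ∀ n ∈ S, ∀ m ∈ T, n * m + n + m ∈ R) :
    sInf ((fun n : ℕ => (n : ℕ∞)) '' R) + 1 ≤
      (sInf ((fun n : ℕ => (n : ℕ∞)) '' S) + 1) * (sInf ((fun n : ℕ => (n : ℕ∞)) '' T) + 1) := by
  rcases S.eq_empty_or_nonempty with rfl | hS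
  · simp [ENat.top_mul]
  rcases T.eq_empty_or_nonempty with rfl | hT
  · simp [ENat.mul_top]
  obtain ⟨n, hn, hn'⟩ := csInf_mem (hS.image fun n : ℕ => (n : ℕ∞))
  obtain ⟨m, hm, hm'⟩ := csInf_mem (hT.image fun n : ℕ => (n : ℕ∞))
  rw [← hn', ← hm']
  calc sInf ((fun n : ℕ => (n : ℕ∞)) '' R) + 1 ≤ ((n * m + n + m : ℕ) : ℕ∞) + 1 := by
        gcongr; exact sInf_le ⟨_, h n hn m hm, rfl⟩
    _ = _ := by push_cast; ring

namespace IsHurewiczFibration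

variable {E B : Type u} [TopologicalSpace E] [TopologicalSpace B] {π : C(E, B)}

theorem exists_homotopic_into_fiber (hπ : IsHurewiczFibration π) {Z : Type u}
    [TopologicalSpace Z] (h₀ : C(Z, E)) {b₀ : B}
    (hh₀ : (π.comp h₀).Homotopic (const Z b₀)) :
    ∃ r : C(Z, π ⁻¹' {b₀}), ((subtypeVal _).comp r).Homotopic h₀ := by
  obtain ⟨H⟩ := hh₀
  obtain ⟨G, hGπ, hG₀⟩ := hπ Z h₀ (H.toContinuousMap.comp prodSwap) H.apply_zero
  have hG₁ (z : Z) : G (z, 1) ∈ π ⁻¹' {b₀} := (hGπ (z, 1)).trans (H.apply_one z)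
  let r : C(Z, π ⁻¹' {b₀}) := ⟨fun z => ⟨G (z, 1), hG₁ z⟩, by fun_prop⟩
  let K : h₀.Homotopy ((subtypeVal _).comp r) :=
    { toContinuousMap := G.comp prodSwap
      map_zero_left := hG₀
      map_one_left := fun _ => rfl }
  exact ⟨r, ⟨K.symm⟩⟩

theorem exists_homotopic_into_fiber_of_nullhomotopic (hπ : IsHurewiczFibration π)
    [PathConnectedSpace B] (b₀ : B) {U : Set B} (hU : (subtypeVal U).Nullhomotopic) :
    ∃ r : C(π ⁻¹' U, π ⁻¹' {b₀}), ((subtypeVal _).comp r).Homotopic (subtypeVal _) := by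
  obtain ⟨c, hc⟩ := hU.comp_left (π.restrictPreimage U)
  exact hπ.exists_homotopic_into_fiber _
    (hc.trans ⟨(PathConnectedSpace.somePath c b₀).toHomotopyConst⟩)

end IsHurewiczFibration

theorem coveredBySections_of_fintype {X A ι : Type*} [TopologicalSpace X] [TopologicalSpace A]
    [Fintype ι] {f : C(A, X)} {n : ℕ} (hcard : Fintype.card ι = n + 1) (U : ι → Set X)
    (hopen : ∀ i, IsOpen (U i)) (hcover : ∀ x, ∃ i, x ∈ U i)
    (hlift : ∀ i, HasHomotopyLift f (subtypeVal (U i))) : CoveredBySections f n := by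
  let e := Fintype.equivFinOfCardEq hcard
  refine ⟨fun k => U (e.symm k), fun k => hopen _, ?_, fun k => hlift _⟩
  refine eq_univ_of_forall fun x => ?_
  obtain ⟨i, hi⟩ := hcover x
  exact mem_iUnion.2 ⟨e i, by simpa using hi⟩

theorem coveredBySections_of_nullCover_of_coveredBySections {E B A C : Type u}
    [TopologicalSpace E] [TopologicalSpace B] [TopologicalSpace A] [TopologicalSpace C]
    {π : C(E, B)} (hπ : IsHurewiczFibration π) [PathConnectedSpace B] {b₀ : B}
    {f : C(A, π ⁻¹' {b₀})} {g : C(C, E)} {φ : C(A, C)} (hsq : g.comp φ = (subtypeVal _).comp f)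
    {n m : ℕ} (hB : NullCover B n) (hf : CoveredBySections f m) :
    CoveredBySections g (n * m + n + m) := by
  obtain ⟨U, hUopen, hUcover, hUnull⟩ := hB
  obtain ⟨V, hVopen, hVcover, hVlift⟩ := hf
  choose r hr using fun i => hπ.exists_homotopic_into_fiber_of_nullhomotopic b₀ (hUnull i)
  refine coveredBySections_of_fintype (ι := Fin (n + 1) × Fin (m + 1)) (by simp; ring)
    (fun p => Subtype.val '' (r p.1 ⁻¹' V p.2))
    (fun p => ((hUopen p.1).preimage π.continuous).isOpenMap_subtype_val _
      ((hVopen p.2).preimage (r p.1).continuous))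
    (fun x => ?_)
    (fun p => hasHomotopyLift_subtypeVal_image_preimage hsq (hr p.1) (hVlift p.2))
  obtain ⟨i, hi⟩ := mem_iUnion.1 (hUcover.symm ▸ mem_univ (π x))
  obtain ⟨j, hj⟩ := mem_iUnion.1 (hVcover.symm ▸ mem_univ (r i ⟨x, hi⟩))
  exact ⟨(i, j), ⟨x, hi⟩, hj, rfl⟩

theorem secat_fibration_general {E B A C : Type u} [TopologicalSpace E] [TopologicalSpace B]
    [TopologicalSpace A] [TopologicalSpace C]
    (π : C(E, B)) (hπ : IsHurewiczFibration π) (b₀ : B)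
    [PathConnectedSpace B]
    (f : C(A, ↑(π ⁻¹' {b₀}))) (g : C(C, E)) (φ : C(A, C))
    (hcomm : ∀ a, g (φ a) = ↑(f a)) :
    secat g + 1 ≤ (LScat B + 1) * (secat f + 1) :=
  ENat.sInf_image_natCast_add_one_le_mul fun _ hn _ hm =>
    coveredBySections_of_nullCover_of_coveredBySections hπ (ContinuousMap.ext hcomm) hn hm

/-- Sectional category over a fibration: given a fibration `π : E → B` over a
well-pointed path-connected base, with fibre inclusion `ι : F → E` over `b₀`, and a
commutative square `ι ∘ f = g ∘ φ` with `f : A → F`, `g : C → E`, one has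
`secat(g) + 1 ≤ (cat(B) + 1)(secat(f) + 1)`. -/
theorem secat_fibration {E B A C : Type u} [TopologicalSpace E] [TopologicalSpace B]
    [TopologicalSpace A] [TopologicalSpace C]
    (π : C(E, B)) (hπ : IsHurewiczFibration π) (b₀ : B)
    [PathConnectedSpace B]
    (hwp : IsCofibration (ContinuousMap.const PUnit b₀))
    (f : C(A, ↑(π ⁻¹' {b₀}))) (g : C(C, E)) (φ : C(A, C))
    (hf : IsCofibration f) (hg : IsCofibration g)
    (hcomm : ∀ a, g (φ a) = ↑(f a)) :
    secat g + 1 ≤ (LScat B + 1) * (secat f + 1) :=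
  secat_fibration_general π hπ b₀ f g φ hcomm
end
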